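/- (Theorem 2, Case 1.) Fix a horizontal position x̂ ∈ [0,D], let 0 < h_min ≤ h_max, and assume X > 0 and x̂ ≤ Ψʰ. Then the map h ↦ SIR_S(x̂,h) is nonincreasing on [h_min, h_max]; in particular, SIR_S(x̂,h) ≤ SIR_S(x̂,h_min) for every h ∈ [h_min,h_max], i.e., the optimal altitude is h* = h_min. -/
import Mathlib


/-- SIR at the UAV located at (x,0,h). -/
noncomputable def SIR1 (pt pM X Y x h : ℝ) : ℝ :=
  pt * ((x - X) ^ 2 + Y ^ 2 + h ^ 2) / (pM * (x ^ 2 + h ^ 2))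

/-- SIR at the Rx when the UAV is located at (x,0,h). -/
noncomputable def SIR2 (pu κ pM D X Y x h : ℝ) : ℝ :=
  pu * κ * (Y ^ 2 + (D - X) ^ 2) / (pM * ((D - x) ^ 2 + h ^ 2))

/-- SIR of the system. -/
noncomputable def SIRS (pt pu κ pM D X Y x h : ℝ) : ℝ :=
  min (SIR1 pt pM X Y x h) (SIR2 pu κ pM D X Y x h)

/-- The threshold Ψʰ. -/
noncomputable def PsiH (X Y : ℝ) : ℝ := (X ^ 2 + Y ^ 2) / (2 * X)

theorem stmt11 (D X Y pt pu pM κ hmin hmax : ℝ) (hD : 0 < D) (hX0 : 0 ≤ X) (hXD : X ≤ D)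
    (hpt : 0 < pt) (hpu : 0 < pu) (hpM : 0 < pM) (hκ : 0 < κ)
    (hhmin : 0 < hmin) (hhm : hmin ≤ hmax)
    (xhat : ℝ) (hxhat : xhat ∈ Set.Icc (0 : ℝ) D)
    (hX : 0 < X) (hcase : xhat ≤ PsiH X Y) :
    AntitoneOn (fun h => SIRS pt pu κ pM D X Y xhat h) (Set.Icc hmin hmax) ∧
    ∀ h ∈ Set.Icc hmin hmax,
      SIRS pt pu κ pM D X Y xhat h ≤ SIRS pt pu κ pM D X Y xhat hmin := by
  have h2x : xhat * (2 * X) ≤ X ^ 2 + Y ^ 2 := by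
    have := hcase
    unfold PsiH at this
    exact (le_div_iff₀ (by positivity)).mp this
  have hBA : xhat ^ 2 ≤ (xhat - X) ^ 2 + Y ^ 2 := by nlinarith
  have hanti : AntitoneOn (fun h => SIRS pt pu κ pM D X Y xhat h) (Set.Icc hmin hmax) := by
    intro h1 h1m h2 h2m h12
    have hh1 : 0 < h1 := lt_of_lt_of_le hhmin h1m.1
    have hh2 : 0 < h2 := lt_of_lt_of_le hhmin h2m.1
    have hsq : h1 ^ 2 ≤ h2 ^ 2 := by nlinarith
    simp only [SIRS]
    apply min_le_min
    · unfold SIR1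
      rw [div_le_div_iff₀ (by positivity) (by positivity)]
      nlinarith [mul_pos hpt hpM, mul_nonneg (mul_pos hpt hpM).le
        (mul_nonneg (sub_nonneg.mpr hBA) (sub_nonneg.mpr hsq))]
    · unfold SIR2
      rw [div_le_div_iff₀ (by positivity) (by positivity)]
      nlinarith [mul_nonneg (mul_nonneg (mul_pos hpu hκ).le
        (by positivity : (0:ℝ) ≤ Y ^ 2 + (D - X) ^ 2)) (mul_nonneg hpM.le (sub_nonneg.mpr hsq))]
  refine ⟨hanti, fun h hm => ?_⟩
  exact hanti ⟨le_refl hmin, hhm⟩ hm hm.1
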